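/- Let g ≥ 0 be fixed, let f ∈ PMod(S_{g,n}) be pseudo-Anosov with n > 38g − 38, and let τ be its invariant train track from the Bestvina–Handel algorithm, with k_1 punctures in complementary monogons and k_2 punctures in complementary bigons. Then k_1 ≥ (n − k_2 + 4 − 4g)/2, and either some monogon containing a puncture has at most 31 real branches attached at its cusp or some bigon containing a puncture has at most 15 real branches attached; consequently the transition matrix M_R on real branches satisfies that M_R^{31} has a positive diagonal entry. -/
import Mathlib


/-!
Abstract framework: the mapping class group of a surface is modelled as a group `G`
acting by isometries (via `act`) on the vertex set of its curve graph, modelled as a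
metric space (with the path metric `dist`).  `aslAt act f α` is the asymptotic
(stable) translation length `liminf_j d(α, f^j α)/j`; by Masur–Minsky a mapping class
is pseudo-Anosov iff this is positive, which we take as the definition
`IsPseudoAnosov`.  `minASL act H` is `L_C(H)`, the minimal asymptotic translation
length over pseudo-Anosov elements of the subgroup `H`.
-/

open Filter

/-- Asymptotic (stable) translation length on the curve graph, from basepoint `α`. -/
noncomputable def aslAt {G V : Type*} [Group G] [MetricSpace V]
    (act : G →* (V ≃ᵢ V)) (f : G) (α : V) : ℝ :=
  liminf (fun j : ℕ => dist α (act (f ^ j) α) / j) atTop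

/-- Asymptotic translation length (independent of the basepoint). -/
noncomputable def asl {G V : Type*} [Group G] [MetricSpace V] [Nonempty V]
    (act : G →* (V ≃ᵢ V)) (f : G) : ℝ :=
  aslAt act f (Classical.arbitrary V)

/-- Masur–Minsky: `f` is pseudo-Anosov iff its asymptotic translation length on the
curve graph is positive; we use this characterization as the definition. -/
def IsPseudoAnosov {G V : Type*} [Group G] [MetricSpace V] [Nonempty V]
    (act : G →* (V ≃ᵢ V)) (f : G) : Prop :=
  0 < asl act f

/-- `L_C(H)`: the minimal asymptotic translation length over the pseudo-Anosov
elements of the subgroup `H`. -/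
noncomputable def minASL {G V : Type*} [Group G] [MetricSpace V] [Nonempty V]
    (act : G →* (V ≃ᵢ V)) (H : Subgroup G) : ℝ :=
  sInf {x : ℝ | ∃ f ∈ H, IsPseudoAnosov act f ∧ asl act f = x}

/-- Fix `g ≥ 0` and let `f` be a pseudo-Anosov element of the pure
mapping class group `PMod(S_{g,n})` (kernel of the permutation action `punctPerm` of
the mapping class group `Mod` on the punctures), with `n > 38g − 38`.  Let `τ` be its
Bestvina–Handel invariant train track, with real branch set `RealBranch` of
cardinality at most `3|χ(S_{g,n})| = 3n + 6g − 6`, transition matrix `MR`, `Mono`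
(resp. `Bi`) the complementary monogons (resp. bigons) containing a puncture,
`k1 = |Mono|`, `k2 = |Bi|`, and `attached p` the number of real branches attached at
the cusp(s) of `p` (each real branch having two ends).  The Euler–Poincaré formula
`k1 + Σ_{s∈S} (2 − P_s) = 4 − 4g` holds, where `S` is the set of singularities with
`P s ≥ 3` prongs, and `k1 + k2 + |S| ≥ n`.  Since `f` fixes each puncture, if a
polygon among `Mono ∪ Bi` has at most `q` real branches attached, then `MR^q` has a
positive diagonal entry (hypothesis `htraverse`).  Then `k1 ≥ (n − k2 + 4 − 4g)/2`,
and either some monogon has at most `31` attached real branches or some bigon has at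
most `15`; consequently `MR^31` has a positive diagonal entry. -/
theorem pureMCG_positive_diagonal (g n : ℕ) (hn : 38 * (g : ℤ) - 38 < (n : ℤ))
    {Mod Curve : Type} [Group Mod] [MetricSpace Curve] [Nonempty Curve]
    (act : Mod →* (Curve ≃ᵢ Curve))
    (punctPerm : Mod →* Equiv.Perm (Fin n))
    (f : Mod) (hf : f ∈ punctPerm.ker) (hpA : IsPseudoAnosov act f)
    {RealBranch : Type} [Fintype RealBranch] [DecidableEq RealBranch]
    (MR : Matrix RealBranch RealBranch ℕ)
    (hr : (Fintype.card RealBranch : ℤ) ≤ 3 * n + 6 * g - 6)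
    {Polygon : Type} (Mono Bi : Finset Polygon)
    (attached : Polygon → ℕ)
    (k1 k2 : ℕ) (hk1 : k1 = Mono.card) (hk2 : k2 = Bi.card)
    {Sing : Type} (S : Finset Sing) (P : Sing → ℕ)
    (hP : ∀ s ∈ S, 3 ≤ P s)
    (hEP : (k1 : ℤ) + ∑ s ∈ S, (2 - (P s : ℤ)) = 4 - 4 * (g : ℤ))
    (hcount : n ≤ k1 + k2 + S.card)
    (hendsMono : ∑ p ∈ Mono, attached p ≤ 2 * Fintype.card RealBranch)
    (hendsBi : ∑ p ∈ Bi, attached p ≤ 2 * Fintype.card RealBranch)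
    (htraverse : ∀ p, (p ∈ Mono ∨ p ∈ Bi) → ∀ q : ℕ, attached p ≤ q →
      ∃ i, 0 < (MR ^ q) i i) :
    ((n : ℚ) - (k2 : ℚ) + 4 - 4 * (g : ℚ)) / 2 ≤ (k1 : ℚ) ∧
    ((∃ p ∈ Mono, attached p ≤ 31) ∨ (∃ p ∈ Bi, attached p ≤ 15)) ∧
    ∃ i, 0 < (MR ^ 31) i i := by

  -- |S| ≤ k1 - 4 + 4g from Euler–Poincaré
  have hS : (S.card : ℤ) ≤ (k1 : ℤ) - 4 + 4 * g := by
    have h1 : (S.card : ℤ) ≤ ∑ s ∈ S, ((P s : ℤ) - 2) := by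
      calc (S.card : ℤ) = ∑ _s ∈ S, (1 : ℤ) := by simp
        _ ≤ ∑ s ∈ S, ((P s : ℤ) - 2) := by
            apply Finset.sum_le_sum
            intro s hs
            have := hP s hs
            omega
    have h2 : ∑ s ∈ S, ((P s : ℤ) - 2) = -∑ s ∈ S, (2 - (P s : ℤ)) := by
      rw [← Finset.sum_neg_distrib]; apply Finset.sum_congr rfl; intros; ring
    omega
  have hcount' : (n : ℤ) ≤ (k1 : ℤ) + k2 + S.card := by exact_mod_cast hcount
  have key1 : (n : ℤ) ≤ 2 * (k1 : ℤ) + k2 - 4 + 4 * g := by omega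
  refine ⟨?_, ?_⟩
  · have : (n : ℚ) ≤ 2 * (k1 : ℚ) + k2 - 4 + 4 * g := by exact_mod_cast key1
    linarith
  have hmain : (∃ p ∈ Mono, attached p ≤ 31) ∨ (∃ p ∈ Bi, attached p ≤ 15) := by
    by_contra hcon
    push_neg at hcon
    obtain ⟨hM, hB⟩ := hcon
    have hMsum : Mono.card * 32 ≤ ∑ p ∈ Mono, attached p := by
      calc Mono.card * 32 = ∑ _p ∈ Mono, 32 := by simp [Finset.sum_const, mul_comm]
        _ ≤ ∑ p ∈ Mono, attached p := by
            apply Finset.sum_le_sum; intro p hp; have := hM p hp; omega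
    have hBsum : Bi.card * 16 ≤ ∑ p ∈ Bi, attached p := by
      calc Bi.card * 16 = ∑ _p ∈ Bi, 16 := by simp [Finset.sum_const, mul_comm]
        _ ≤ ∑ p ∈ Bi, attached p := by
            apply Finset.sum_le_sum; intro p hp; have := hB p hp; omega
    have h32 : (k1 : ℤ) * 32 ≤ 2 * Fintype.card RealBranch := by
      exact_mod_cast hk1 ▸ (hMsum.trans hendsMono)
    have h16 : (k2 : ℤ) * 16 ≤ 2 * Fintype.card RealBranch := by
      exact_mod_cast hk2 ▸ (hBsum.trans hendsBi)
    have hg : (0 : ℤ) ≤ g := Int.natCast_nonneg g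
    have hn0 : (0 : ℤ) ≤ n := Int.natCast_nonneg n
    omega
  refine ⟨hmain, ?_⟩
  rcases hmain with ⟨p, hp, hle⟩ | ⟨p, hp, hle⟩
  · exact htraverse p (Or.inl hp) 31 hle
  · exact htraverse p (Or.inr hp) 31 (by omega)
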